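/- arXiv:2009.14397 — 4 statements merged into one kernel-verified Lean document; each statement's English description precedes it below -/
import Mathlib

section
/- Fix an integer d ≥ 3 and an integer k ≥ 1. Let κ : (−1,1) → ℝ be C^∞ with κ'(t)(1−t²)^{(d−1)/2} = O(1) as t → ±1, and define κ̃(t) = −κ''(t)(1−t²) + (d−1) t κ'(t). Assume that the one-sided limits L₁^{±} := lim_{t→±1} κ(t)(1−t²)^{(d−1)/2} P_k'(t) and L₂^{±} := lim_{t→±1} κ'(t)(1−t²)^{(d−1)/2} P_k(t) exist, and that t ↦ κ(t) P_k(t)(1−t²)^{(d−3)/2} and t ↦ κ̃(t) P_k(t)(1−t²)^{(d−3)/2} are integrable on (−1,1). Then ∫_{−1}^{1} κ(t) P_k(t) (1−t²)^{(d−3)/2} dt = (1/(k(k+d−2))) · ( −(L₁^{+} − L₁^{−}) + (L₂^{+} − L₂^{−}) + ∫_{−1}^{1} κ̃(t) P_k(t) (1−t²)^{(d−3)/2} dt ). -/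
open Filter Asymptotics Real Set Topology

/-- Legendre polynomial of degree `k` in dimension `d` (Rodrigues formula). -/
noncomputable def legendreP (d k : ℕ) (t : ℝ) : ℝ :=
  (-1 / 2 : ℝ) ^ k * (Real.Gamma (((d : ℝ) - 1) / 2) / Real.Gamma ((k : ℝ) + ((d : ℝ) - 1) / 2)) *
    (1 - t ^ 2) ^ ((3 - (d : ℝ)) / 2) *
    iteratedDeriv k (fun s : ℝ => (1 - s ^ 2) ^ ((k : ℝ) + ((d : ℝ) - 3) / 2)) t

/-- Surface area `ω_{p-1}` of the unit sphere in `ℝ^p`. -/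
noncomputable def sphereSurface (p : ℕ) : ℝ :=
  2 * Real.pi ^ ((p : ℝ) / 2) / Real.Gamma ((p : ℝ) / 2)

/-- `μ_k(κ)`, the `k`-th Legendre coefficient of `κ` in dimension `d`. -/
noncomputable def legendreCoeff (d k : ℕ) (κ : ℝ → ℝ) : ℝ :=
  (sphereSurface (d - 1) / sphereSurface d) *
    ∫ t in (-1 : ℝ)..1, κ t * legendreP d k t * (1 - t ^ 2) ^ (((d : ℝ) - 3) / 2)

/-! ### Auxiliary lemmas -/

/-- The inner function of the Rodrigues formula. -/
noncomputable def rodF (α : ℝ) : ℝ → ℝ := fun s => (1 - s ^ 2) ^ α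

lemma rodF_contDiffOn (α : ℝ) (n : ℕ) :
    ContDiffOn ℝ (⊤ : ℕ∞) (iteratedDeriv n (rodF α)) (Set.Ioo (-1 : ℝ) 1) := by
  induction n with
  | zero =>
    rw [iteratedDeriv_zero]
    have h1 : ContDiffOn ℝ (⊤ : ℕ∞) (fun s : ℝ => 1 - s ^ 2) (Set.Ioo (-1 : ℝ) 1) :=
      (contDiff_const.sub (contDiff_id.pow 2)).contDiffOn
    exact h1.rpow_const_of_ne (fun x hx => by nlinarith [hx.1, hx.2])
  | succ n ih =>
    rw [iteratedDeriv_succ]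
    exact ih.deriv_of_isOpen isOpen_Ioo (by norm_num)

lemma rodF_hasDerivAt (α : ℝ) (n : ℕ) {t : ℝ} (ht : t ∈ Set.Ioo (-1 : ℝ) 1) :
    HasDerivAt (iteratedDeriv n (rodF α)) (iteratedDeriv (n + 1) (rodF α) t) t := by
  have h := (rodF_contDiffOn α n).contDiffAt (isOpen_Ioo.mem_nhds ht)
  have hd : DifferentiableAt ℝ (iteratedDeriv n (rodF α)) t := h.differentiableAt (by norm_num)
  rw [iteratedDeriv_succ]
  exact hd.hasDerivAt

lemma rodF_rel0 (α : ℝ) {t : ℝ} (ht : t ∈ Set.Ioo (-1 : ℝ) 1) :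
    (1 - t ^ 2) * iteratedDeriv 1 (rodF α) t + 2 * α * t * iteratedDeriv 0 (rodF α) t = 0 := by
  have ht2 : (0 : ℝ) < 1 - t ^ 2 := by nlinarith [ht.1, ht.2]
  have hb : HasDerivAt (fun s : ℝ => 1 - s ^ 2) (-(2 * t ^ 1)) t := by
    simpa using (hasDerivAt_pow 2 t).const_sub 1
  have hF : HasDerivAt (rodF α) (-(2 * t ^ 1) * α * (1 - t ^ 2) ^ (α - 1)) t :=
    hb.rpow_const (Or.inl ht2.ne')
  have h1 : iteratedDeriv 1 (rodF α) t = -(2 * t ^ 1) * α * (1 - t ^ 2) ^ (α - 1) := by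
    rw [iteratedDeriv_one]; exact hF.deriv
  have e : (1 - t ^ 2) * (1 - t ^ 2) ^ (α - 1) = (1 - t ^ 2) ^ α := by
    have := (Real.rpow_add ht2 1 (α - 1)).symm
    rw [Real.rpow_one] at this
    rw [this, show (1 : ℝ) + (α - 1) = α by ring]
  rw [h1, iteratedDeriv_zero]
  show (1 - t ^ 2) * (-(2 * t ^ 1) * α * (1 - t ^ 2) ^ (α - 1))
    + 2 * α * t * (1 - t ^ 2) ^ α = 0
  linear_combination (-(2 * t ^ 1) * α) * e

lemma rodF_relS (α : ℝ) (n : ℕ) : ∀ t ∈ Set.Ioo (-1 : ℝ) 1,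
    (1 - t ^ 2) * iteratedDeriv (n + 2) (rodF α) t
      + (2 * α - 2 * ((n : ℝ) + 1)) * t * iteratedDeriv (n + 1) (rodF α) t
      + ((n : ℝ) + 1) * (2 * α - (n : ℝ)) * iteratedDeriv n (rodF α) t = 0 := by
  induction n with
  | zero =>
    intro t ht
    set A : ℝ → ℝ := fun s =>
      (1 - s ^ 2) * iteratedDeriv 1 (rodF α) s + 2 * α * s * iteratedDeriv 0 (rodF α) s with hA
    have hb : HasDerivAt (fun s : ℝ => 1 - s ^ 2) (-(2 * t ^ 1)) t := by
      simpa using (hasDerivAt_pow 2 t).const_sub 1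
    have hAd : HasDerivAt A
        ((-(2 * t ^ 1) * iteratedDeriv 1 (rodF α) t + (1 - t ^ 2) * iteratedDeriv 2 (rodF α) t)
          + (2 * α * 1 * iteratedDeriv 0 (rodF α) t
            + 2 * α * t * iteratedDeriv 1 (rodF α) t)) t :=
      (hb.mul (rodF_hasDerivAt α 1 ht)).add
        (((hasDerivAt_id t).const_mul (2 * α)).mul (rodF_hasDerivAt α 0 ht))
    have hA0 : A =ᶠ[nhds t] fun _ => (0 : ℝ) := by
      filter_upwards [isOpen_Ioo.mem_nhds ht] with s hs using rodF_rel0 α hs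
    have hzero : (-(2 * t ^ 1) * iteratedDeriv 1 (rodF α) t
          + (1 - t ^ 2) * iteratedDeriv 2 (rodF α) t)
          + (2 * α * 1 * iteratedDeriv 0 (rodF α) t
            + 2 * α * t * iteratedDeriv 1 (rodF α) t) = 0 := by
      rw [← hAd.deriv, hA0.deriv_eq, deriv_const]
    push_cast
    linear_combination hzero
  | succ n ih =>
    intro t ht
    set A : ℝ → ℝ := fun s =>
      (1 - s ^ 2) * iteratedDeriv (n + 2) (rodF α) s
        + (2 * α - 2 * ((n : ℝ) + 1)) * s * iteratedDeriv (n + 1) (rodF α) s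
        + ((n : ℝ) + 1) * (2 * α - (n : ℝ)) * iteratedDeriv n (rodF α) s with hA
    have hb : HasDerivAt (fun s : ℝ => 1 - s ^ 2) (-(2 * t ^ 1)) t := by
      simpa using (hasDerivAt_pow 2 t).const_sub 1
    have hAd : HasDerivAt A
        (((-(2 * t ^ 1) * iteratedDeriv (n + 2) (rodF α) t
            + (1 - t ^ 2) * iteratedDeriv (n + 3) (rodF α) t)
          + ((2 * α - 2 * ((n : ℝ) + 1)) * 1 * iteratedDeriv (n + 1) (rodF α) t
            + (2 * α - 2 * ((n : ℝ) + 1)) * t * iteratedDeriv (n + 2) (rodF α) t))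
          + ((n : ℝ) + 1) * (2 * α - (n : ℝ)) * iteratedDeriv (n + 1) (rodF α) t) t :=
      ((hb.mul (rodF_hasDerivAt α (n + 2) ht)).add
        (((hasDerivAt_id t).const_mul (2 * α - 2 * ((n : ℝ) + 1))).mul
          (rodF_hasDerivAt α (n + 1) ht))).add
        ((rodF_hasDerivAt α n ht).const_mul (((n : ℝ) + 1) * (2 * α - (n : ℝ))))
    have hA0 : A =ᶠ[nhds t] fun _ => (0 : ℝ) := by
      filter_upwards [isOpen_Ioo.mem_nhds ht] with s hs using ih s hs
    have hzero := hAd.deriv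
    rw [hA0.deriv_eq, deriv_const] at hzero
    push_cast
    have h3 : n + 1 + 2 = n + 3 := by ring
    rw [h3]
    linear_combination -hzero

lemma legendreP_eq (d k : ℕ) : legendreP d k = fun t =>
    ((-1 / 2 : ℝ) ^ k *
        (Real.Gamma (((d : ℝ) - 1) / 2) / Real.Gamma ((k : ℝ) + ((d : ℝ) - 1) / 2))) *
      (1 - t ^ 2) ^ ((3 - (d : ℝ)) / 2) *
      iteratedDeriv k (rodF ((k : ℝ) + ((d : ℝ) - 3) / 2)) t := rfl

lemma legendreP_hasDerivAt (d k : ℕ) {t : ℝ} (ht : t ∈ Set.Ioo (-1 : ℝ) 1) :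
    HasDerivAt (legendreP d k)
      ((((-1 / 2 : ℝ) ^ k *
          (Real.Gamma (((d : ℝ) - 1) / 2) / Real.Gamma ((k : ℝ) + ((d : ℝ) - 1) / 2))) *
        (-(2 * t ^ 1) * ((3 - (d : ℝ)) / 2) * (1 - t ^ 2) ^ ((3 - (d : ℝ)) / 2 - 1))) *
        iteratedDeriv k (rodF ((k : ℝ) + ((d : ℝ) - 3) / 2)) t
      + (((-1 / 2 : ℝ) ^ k *
          (Real.Gamma (((d : ℝ) - 1) / 2) / Real.Gamma ((k : ℝ) + ((d : ℝ) - 1) / 2))) *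
        (1 - t ^ 2) ^ ((3 - (d : ℝ)) / 2)) *
        iteratedDeriv (k + 1) (rodF ((k : ℝ) + ((d : ℝ) - 3) / 2)) t) t := by
  have ht2 : (0 : ℝ) < 1 - t ^ 2 := by nlinarith [ht.1, ht.2]
  have hb : HasDerivAt (fun s : ℝ => 1 - s ^ 2) (-(2 * t ^ 1)) t := by
    simpa using (hasDerivAt_pow 2 t).const_sub 1
  have hB : HasDerivAt (fun s : ℝ => (1 - s ^ 2) ^ ((3 - (d : ℝ)) / 2))
      (-(2 * t ^ 1) * ((3 - (d : ℝ)) / 2) * (1 - t ^ 2) ^ ((3 - (d : ℝ)) / 2 - 1)) t :=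
    hb.rpow_const (Or.inl ht2.ne')
  rw [legendreP_eq]
  exact (hB.const_mul _).mul (rodF_hasDerivAt _ k ht)

lemma legendre_key (d k : ℕ) {t : ℝ} (ht : t ∈ Set.Ioo (-1 : ℝ) 1) :
    (1 - t ^ 2) ^ (((d : ℝ) - 1) / 2) * deriv (legendreP d k) t =
      ((-1 / 2 : ℝ) ^ k *
          (Real.Gamma (((d : ℝ) - 1) / 2) / Real.Gamma ((k : ℝ) + ((d : ℝ) - 1) / 2))) *
        (((d : ℝ) - 3) * t * iteratedDeriv k (rodF ((k : ℝ) + ((d : ℝ) - 3) / 2)) t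
          + (1 - t ^ 2) * iteratedDeriv (k + 1) (rodF ((k : ℝ) + ((d : ℝ) - 3) / 2)) t) := by
  have ht2 : (0 : ℝ) < 1 - t ^ 2 := by nlinarith [ht.1, ht.2]
  rw [(legendreP_hasDerivAt d k ht).deriv]
  have E1 : (1 - t ^ 2) ^ (((d : ℝ) - 1) / 2) * (1 - t ^ 2) ^ ((3 - (d : ℝ)) / 2 - 1) = 1 := by
    rw [← Real.rpow_add ht2, show ((d : ℝ) - 1) / 2 + ((3 - (d : ℝ)) / 2 - 1) = 0 by ring,
      Real.rpow_zero]
  have E2 : (1 - t ^ 2) ^ (((d : ℝ) - 1) / 2) * (1 - t ^ 2) ^ ((3 - (d : ℝ)) / 2) = 1 - t ^ 2 := by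
    rw [← Real.rpow_add ht2, show ((d : ℝ) - 1) / 2 + (3 - (d : ℝ)) / 2 = (1 : ℝ) by ring,
      Real.rpow_one]
  set C := (-1 / 2 : ℝ) ^ k *
    (Real.Gamma (((d : ℝ) - 1) / 2) / Real.Gamma ((k : ℝ) + ((d : ℝ) - 1) / 2))
  set Gk := iteratedDeriv k (rodF ((k : ℝ) + ((d : ℝ) - 3) / 2)) t
  set Gk1 := iteratedDeriv (k + 1) (rodF ((k : ℝ) + ((d : ℝ) - 3) / 2)) t
  linear_combination (C * (-(2 * t ^ 1)) * ((3 - (d : ℝ)) / 2) * Gk) * E1 + (C * Gk1) * E2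

lemma H_hasDerivAt (d k : ℕ) (κ : ℝ → ℝ) {t : ℝ} (ht : t ∈ Set.Ioo (-1 : ℝ) 1)
    (hκd : HasDerivAt κ (deriv κ t) t) (hκ'd : HasDerivAt (deriv κ) (deriv (deriv κ) t) t) :
    HasDerivAt (fun s =>
        -(κ s * (((-1 / 2 : ℝ) ^ k *
            (Real.Gamma (((d : ℝ) - 1) / 2) / Real.Gamma ((k : ℝ) + ((d : ℝ) - 1) / 2))) *
          (((d : ℝ) - 3) * s * iteratedDeriv k (rodF ((k : ℝ) + ((d : ℝ) - 3) / 2)) s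
            + (1 - s ^ 2) * iteratedDeriv (k + 1) (rodF ((k : ℝ) + ((d : ℝ) - 3) / 2)) s)))
        + deriv κ s * (1 - s ^ 2) ^ (((d : ℝ) - 1) / 2) * legendreP d k s)
      ((k : ℝ) * ((k : ℝ) + (d : ℝ) - 2) *
          (κ t * legendreP d k t * (1 - t ^ 2) ^ (((d : ℝ) - 3) / 2))
        - ((-(deriv (deriv κ) t) * (1 - t ^ 2) + ((d : ℝ) - 1) * t * deriv κ t) *
            legendreP d k t * (1 - t ^ 2) ^ (((d : ℝ) - 3) / 2))) t := by
  have ht2 : (0 : ℝ) < 1 - t ^ 2 := by nlinarith [ht.1, ht.2]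
  have hb : HasDerivAt (fun s : ℝ => 1 - s ^ 2) (-(2 * t ^ 1)) t := by
    simpa using (hasDerivAt_pow 2 t).const_sub 1
  have hw : HasDerivAt (fun s : ℝ => (1 - s ^ 2) ^ (((d : ℝ) - 1) / 2))
      (-(2 * t ^ 1) * (((d : ℝ) - 1) / 2) * (1 - t ^ 2) ^ (((d : ℝ) - 1) / 2 - 1)) t :=
    hb.rpow_const (Or.inl ht2.ne')
  have hψ : HasDerivAt (fun s =>
      ((-1 / 2 : ℝ) ^ k *
          (Real.Gamma (((d : ℝ) - 1) / 2) / Real.Gamma ((k : ℝ) + ((d : ℝ) - 1) / 2))) *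
        (((d : ℝ) - 3) * s * iteratedDeriv k (rodF ((k : ℝ) + ((d : ℝ) - 3) / 2)) s
          + (1 - s ^ 2) * iteratedDeriv (k + 1) (rodF ((k : ℝ) + ((d : ℝ) - 3) / 2)) s))
      (((-1 / 2 : ℝ) ^ k *
          (Real.Gamma (((d : ℝ) - 1) / 2) / Real.Gamma ((k : ℝ) + ((d : ℝ) - 1) / 2))) *
        ((((d : ℝ) - 3) * 1 * iteratedDeriv k (rodF ((k : ℝ) + ((d : ℝ) - 3) / 2)) t
            + ((d : ℝ) - 3) * t * iteratedDeriv (k + 1) (rodF ((k : ℝ) + ((d : ℝ) - 3) / 2)) t)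
          + (-(2 * t ^ 1) * iteratedDeriv (k + 1) (rodF ((k : ℝ) + ((d : ℝ) - 3) / 2)) t
            + (1 - t ^ 2) * iteratedDeriv (k + 2) (rodF ((k : ℝ) + ((d : ℝ) - 3) / 2)) t))) t :=
    ((((hasDerivAt_id t).const_mul ((d : ℝ) - 3)).mul (rodF_hasDerivAt _ k ht)).add
      (hb.mul (rodF_hasDerivAt _ (k + 1) ht))).const_mul _
  have hraw := ((hκd.mul hψ).neg).add ((hκ'd.mul hw).mul (legendreP_hasDerivAt d k ht))
  refine hraw.congr_deriv ?_
  symm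
  simp only [Pi.mul_apply]
  -- now a pure algebraic identity
  have E0 : (1 - t ^ 2) ^ ((3 - (d : ℝ)) / 2) * (1 - t ^ 2) ^ (((d : ℝ) - 3) / 2) = 1 := by
    rw [← Real.rpow_add ht2, show (3 - (d : ℝ)) / 2 + ((d : ℝ) - 3) / 2 = 0 by ring,
      Real.rpow_zero]
  have E1 : (1 - t ^ 2) ^ (((d : ℝ) - 1) / 2) * (1 - t ^ 2) ^ ((3 - (d : ℝ)) / 2 - 1) = 1 := by
    rw [← Real.rpow_add ht2, show ((d : ℝ) - 1) / 2 + ((3 - (d : ℝ)) / 2 - 1) = 0 by ring,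
      Real.rpow_zero]
  have E2 : (1 - t ^ 2) ^ (((d : ℝ) - 1) / 2) * (1 - t ^ 2) ^ ((3 - (d : ℝ)) / 2) = 1 - t ^ 2 := by
    rw [← Real.rpow_add ht2, show ((d : ℝ) - 1) / 2 + (3 - (d : ℝ)) / 2 = (1 : ℝ) by ring,
      Real.rpow_one]
  have E5 : (1 - t ^ 2) ^ (((d : ℝ) - 1) / 2 - 1) * (1 - t ^ 2) ^ ((3 - (d : ℝ)) / 2) = 1 := by
    rw [← Real.rpow_add ht2, show ((d : ℝ) - 1) / 2 - 1 + (3 - (d : ℝ)) / 2 = 0 by ring,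
      Real.rpow_zero]
  have rel := rodF_relS ((k : ℝ) + ((d : ℝ) - 3) / 2) k t ht
  rw [legendreP_eq]
  set C := (-1 / 2 : ℝ) ^ k *
    (Real.Gamma (((d : ℝ) - 1) / 2) / Real.Gamma ((k : ℝ) + ((d : ℝ) - 1) / 2))
  set Gk := iteratedDeriv k (rodF ((k : ℝ) + ((d : ℝ) - 3) / 2)) t
  set Gk1 := iteratedDeriv (k + 1) (rodF ((k : ℝ) + ((d : ℝ) - 3) / 2)) t
  set Gk2 := iteratedDeriv (k + 2) (rodF ((k : ℝ) + ((d : ℝ) - 3) / 2)) t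
  set K := (k : ℝ) * ((k : ℝ) + (d : ℝ) - 2)
  linear_combination
    ((K * κ t * C * Gk + deriv (deriv κ) t * (1 - t ^ 2) * C * Gk
        - ((d : ℝ) - 1) * t * deriv κ t * C * Gk) * E0)
    + (-(deriv κ t * C * ((d : ℝ) - 3) * t * Gk) * E1)
    + (-((deriv (deriv κ) t * C * Gk + deriv κ t * C * Gk1)) * E2)
    + (((d : ℝ) - 1) * t * deriv κ t * C * Gk * E5)
    + ((κ t * C) * rel)

/-- Integration by parts lemma for Legendre coefficients. -/
theorem integration_by_parts_legendre (d k : ℕ) (hd : 3 ≤ d) (hk : 1 ≤ k) (κ : ℝ → ℝ)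
    (hκ : ContDiffOn ℝ (⊤ : ℕ∞) κ (Set.Ioo (-1 : ℝ) 1))
    (hbdd1 : (fun t : ℝ => deriv κ t * (1 - t ^ 2) ^ (((d : ℝ) - 1) / 2))
      =O[𝓝[Set.Ioo (-1 : ℝ) 1] 1] fun _ => (1 : ℝ))
    (hbddm1 : (fun t : ℝ => deriv κ t * (1 - t ^ 2) ^ (((d : ℝ) - 1) / 2))
      =O[𝓝[Set.Ioo (-1 : ℝ) 1] (-1)] fun _ => (1 : ℝ))
    (L1p L1m L2p L2m : ℝ)
    (hL1p : Tendsto (fun t : ℝ => κ t * (1 - t ^ 2) ^ (((d : ℝ) - 1) / 2) * deriv (legendreP d k) t)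
      (𝓝[Set.Ioo (-1 : ℝ) 1] 1) (𝓝 L1p))
    (hL1m : Tendsto (fun t : ℝ => κ t * (1 - t ^ 2) ^ (((d : ℝ) - 1) / 2) * deriv (legendreP d k) t)
      (𝓝[Set.Ioo (-1 : ℝ) 1] (-1)) (𝓝 L1m))
    (hL2p : Tendsto (fun t : ℝ => deriv κ t * (1 - t ^ 2) ^ (((d : ℝ) - 1) / 2) * legendreP d k t)
      (𝓝[Set.Ioo (-1 : ℝ) 1] 1) (𝓝 L2p))
    (hL2m : Tendsto (fun t : ℝ => deriv κ t * (1 - t ^ 2) ^ (((d : ℝ) - 1) / 2) * legendreP d k t)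
      (𝓝[Set.Ioo (-1 : ℝ) 1] (-1)) (𝓝 L2m))
    (hint : IntervalIntegrable
      (fun t : ℝ => κ t * legendreP d k t * (1 - t ^ 2) ^ (((d : ℝ) - 3) / 2))
      MeasureTheory.volume (-1) 1)
    (hint' : IntervalIntegrable
      (fun t : ℝ => (-(deriv (deriv κ) t) * (1 - t ^ 2) + ((d : ℝ) - 1) * t * deriv κ t) *
        legendreP d k t * (1 - t ^ 2) ^ (((d : ℝ) - 3) / 2))
      MeasureTheory.volume (-1) 1) :
    ∫ t in (-1 : ℝ)..1, κ t * legendreP d k t * (1 - t ^ 2) ^ (((d : ℝ) - 3) / 2) =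
      (1 / ((k : ℝ) * ((k : ℝ) + (d : ℝ) - 2))) *
        (-(L1p - L1m) + (L2p - L2m) +
          ∫ t in (-1 : ℝ)..1,
            (-(deriv (deriv κ) t) * (1 - t ^ 2) + ((d : ℝ) - 1) * t * deriv κ t) *
              legendreP d k t * (1 - t ^ 2) ^ (((d : ℝ) - 3) / 2)) := by
  have h11 : (-1 : ℝ) < 1 := by norm_num
  set K := (k : ℝ) * ((k : ℝ) + (d : ℝ) - 2) with hK
  have hKpos : 0 < K := by
    have h1 : (1 : ℝ) ≤ (k : ℝ) := by exact_mod_cast hk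
    have h2 : (3 : ℝ) ≤ (d : ℝ) := by exact_mod_cast hd
    have : 0 < (k : ℝ) + (d : ℝ) - 2 := by linarith
    positivity
  set H : ℝ → ℝ := fun s =>
    -(κ s * (((-1 / 2 : ℝ) ^ k *
        (Real.Gamma (((d : ℝ) - 1) / 2) / Real.Gamma ((k : ℝ) + ((d : ℝ) - 1) / 2))) *
      (((d : ℝ) - 3) * s * iteratedDeriv k (rodF ((k : ℝ) + ((d : ℝ) - 3) / 2)) s
        + (1 - s ^ 2) * iteratedDeriv (k + 1) (rodF ((k : ℝ) + ((d : ℝ) - 3) / 2)) s)))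
    + deriv κ s * (1 - s ^ 2) ^ (((d : ℝ) - 1) / 2) * legendreP d k s with hHdef
  -- H agrees on Ioo with the function appearing in the limit hypotheses
  have hHeq : ∀ t ∈ Set.Ioo (-1 : ℝ) 1,
      -(κ t * (1 - t ^ 2) ^ (((d : ℝ) - 1) / 2) * deriv (legendreP d k) t)
        + deriv κ t * (1 - t ^ 2) ^ (((d : ℝ) - 1) / 2) * legendreP d k t = H t := by
    intro t ht
    rw [hHdef]
    rw [mul_assoc, legendre_key d k ht]
  -- limits of H at the endpoints
  have hHp : Tendsto H (𝓝[Set.Ioo (-1 : ℝ) 1] 1) (𝓝 (-L1p + L2p)) := by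
    refine ((hL1p.neg).add hL2p).congr' ?_
    filter_upwards [eventually_mem_nhdsWithin] with s hs using hHeq s hs
  have hHm : Tendsto H (𝓝[Set.Ioo (-1 : ℝ) 1] (-1)) (𝓝 (-L1m + L2m)) := by
    refine ((hL1m.neg).add hL2m).congr' ?_
    filter_upwards [eventually_mem_nhdsWithin] with s hs using hHeq s hs
  -- κ derivative facts
  have hκ' : ContDiffOn ℝ (⊤ : ℕ∞) (deriv κ) (Set.Ioo (-1 : ℝ) 1) :=
    hκ.deriv_of_isOpen isOpen_Ioo (by simp)
  have hHd : ∀ t ∈ Set.Ioo (-1 : ℝ) 1, HasDerivAt H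
      (K * (κ t * legendreP d k t * (1 - t ^ 2) ^ (((d : ℝ) - 3) / 2))
        - ((-(deriv (deriv κ) t) * (1 - t ^ 2) + ((d : ℝ) - 1) * t * deriv κ t) *
            legendreP d k t * (1 - t ^ 2) ^ (((d : ℝ) - 3) / 2))) t := by
    intro t ht
    have hκd : HasDerivAt κ (deriv κ t) t :=
      ((hκ.contDiffAt (isOpen_Ioo.mem_nhds ht)).differentiableAt (by simp)).hasDerivAt
    have hκ'd : HasDerivAt (deriv κ) (deriv (deriv κ) t) t :=
      ((hκ'.contDiffAt (isOpen_Ioo.mem_nhds ht)).differentiableAt (by simp)).hasDerivAt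
    exact H_hasDerivAt d k κ ht hκd hκ'd
  -- integrability of the derivative
  have hintc : IntervalIntegrable
      (fun t : ℝ => K * (κ t * legendreP d k t * (1 - t ^ 2) ^ (((d : ℝ) - 3) / 2))
        - ((-(deriv (deriv κ) t) * (1 - t ^ 2) + ((d : ℝ) - 1) * t * deriv κ t) *
            legendreP d k t * (1 - t ^ 2) ^ (((d : ℝ) - 3) / 2)))
      MeasureTheory.volume (-1) 1 := (hint.const_mul K).sub hint'
  -- fundamental theorem of calculus
  have key := intervalIntegral.integral_eq_sub_of_hasDerivAt_of_tendsto h11 hHd hintc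
    (by rw [← nhdsWithin_Ioo_eq_nhdsGT h11]; exact hHm)
    (by rw [← nhdsWithin_Ioo_eq_nhdsLT h11]; exact hHp)
  rw [intervalIntegral.integral_sub (hint.const_mul K) hint',
    intervalIntegral.integral_const_mul] at key
  have hKne : K ≠ 0 := hKpos.ne'
  rw [one_div, inv_mul_eq_div, eq_div_iff hKne]
  linear_combination key
end

section
/- The degree-1 arc-cosine function κ₁(u) = (√(1−u²) + u(π − arccos(u)))/π satisfies, as t → 0⁺, the asymptotic expansions κ₁(1−t) = 1 − t + (2√2/(3π)) t^{3/2} + O(t^{5/2}) and κ₁(−1+t) = (2√2/(3π)) t^{3/2} + O(t^{5/2}). -/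
/-!
Since `κ₁(u) - κ₁(-u) = u`, both expansions reduce to the one at `-1`. There we substitute
`t = 1 - cos θ = 2 sin² (θ/2)`, which turns `π κ₁(-1 + t)` into `sin θ - θ cos θ` and the
claimed leading term into `(8/3) sin³ (θ/2)`. The difference of the two has derivative
`sin θ (θ - 2 sin (θ/2)) = O(θ⁴)`, so it is `O(θ⁵)`, and Jordan's inequality `θ ≤ π sin (θ/2)`
converts `O(θ⁵)` into `O(t^{5/2})`.
-/

open Filter Asymptotics Real Set Topology

/-- The degree-0 arc-cosine function `κ₀(u) = 1 - arccos(u)/π`. -/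
noncomputable def kappa0 (u : ℝ) : ℝ := 1 - Real.arccos u / Real.pi

/-- The degree-1 arc-cosine function `κ₁(u) = (√(1-u²) + u(π - arccos u))/π`. -/
noncomputable def kappa1 (u : ℝ) : ℝ :=
  (Real.sqrt (1 - u ^ 2) + u * (Real.pi - Real.arccos u)) / Real.pi

theorem kappa1_sub_kappa1_neg (u : ℝ) : kappa1 u - kappa1 (-u) = u := by
  simp only [kappa1, arccos_neg, neg_sq]
  field_simp
  ring

theorem kappa1_neg_cos {θ : ℝ} (h0 : 0 ≤ θ) (hπ : θ ≤ π) :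
    kappa1 (-cos θ) = (sin θ - θ * cos θ) / π := by
  rw [kappa1, arccos_neg, arccos_cos h0 hπ, neg_sq, ← sin_sq,
    sqrt_sq (sin_nonneg_of_nonneg_of_le_pi h0 hπ)]
  ring

theorem abs_sub_two_mul_sin_half_le (x : ℝ) : |x - 2 * sin (x / 2)| ≤ |x| ^ 3 / 24 := by
  have h := abs_sub_sin_le (x / 2)
  rw [abs_div, abs_two] at h
  rw [show x - 2 * sin (x / 2) = 2 * (x / 2 - sin (x / 2)) by ring, abs_mul, abs_two]
  linarith

theorem hasDerivAt_sin_sub_mul_cos_sub_sin_half_pow (θ : ℝ) :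
    HasDerivAt (fun x => sin x - x * cos x - 8 / 3 * sin (x / 2) ^ 3)
      (sin θ * (θ - 2 * sin (θ / 2))) θ := by
  have h := ((hasDerivAt_sin θ).sub ((hasDerivAt_id θ).mul (hasDerivAt_cos θ))).sub
    ((((hasDerivAt_id θ).div_const 2).sin.pow 3).const_mul (8 / 3 : ℝ))
  refine h.congr_deriv ?_
  have hsin : sin θ = 2 * sin (θ / 2) * cos (θ / 2) := by
    rw [← sin_two_mul]; ring_nf
  simp only [id, hsin]
  push_cast
  ring

theorem abs_sin_sub_mul_cos_sub_sin_half_pow_le {θ : ℝ} (hθ : 0 ≤ θ) :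
    |sin θ - θ * cos θ - 8 / 3 * sin (θ / 2) ^ 3| ≤ θ ^ 5 / 24 := by
  have key := norm_image_sub_le_of_norm_deriv_le_segment' (C := θ ^ 4 / 24)
    (fun x _ => (hasDerivAt_sin_sub_mul_cos_sub_sin_half_pow x).hasDerivWithinAt)
    (fun s hs => ?_) θ (right_mem_Icc.2 hθ)
  · simpa [div_mul_eq_mul_div, ← pow_succ] using key
  · obtain ⟨hs0, hsθ⟩ := hs
    calc ‖sin s * (s - 2 * sin (s / 2))‖ = |sin s| * |s - 2 * sin (s / 2)| := by
          rw [norm_eq_abs, abs_mul]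
      _ ≤ |s| * (|s| ^ 3 / 24) :=
          mul_le_mul abs_sin_le_abs (abs_sub_two_mul_sin_half_le s) (abs_nonneg _) (abs_nonneg _)
      _ = |s| ^ 4 / 24 := by ring
      _ ≤ θ ^ 4 / 24 := by
          gcongr
          exact (abs_of_nonneg hs0).trans_le hsθ.le

theorem abs_kappa1_neg_one_add_sub_le {t : ℝ} (ht0 : 0 ≤ t) (ht2 : t ≤ 2) :
    |kappa1 (-1 + t) - 2 * √2 / (3 * π) * t ^ ((3 : ℝ) / 2)| ≤
      π ^ 4 / 24 * t ^ ((5 : ℝ) / 2) := by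
  set θ := arccos (1 - t)
  have hθ0 : 0 ≤ θ := arccos_nonneg _
  have hθπ : θ ≤ π := arccos_le_pi _
  have hcos : cos θ = 1 - t := cos_arccos (by linarith) (by linarith)
  set s := sin (θ / 2)
  have hs0 : 0 ≤ s := sin_nonneg_of_nonneg_of_le_pi (by positivity) (by linarith)
  have hts : t = 2 * s ^ 2 := by
    rw [sin_sq_eq_half_sub, show 2 * (θ / 2) = θ by ring, hcos]; ring
  have hsqrt : √t = √2 * s := by
    rw [hts, sqrt_mul zero_le_two, sqrt_sq hs0]
  have hθs : θ ≤ π * s := by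
    have h := mul_le_sin (x := θ / 2) (by positivity) (by linarith)
    rw [show 2 / π * (θ / 2) = θ / π by field_simp, div_le_iff₀ pi_pos] at h
    linarith
  have hrpow (n : ℕ) : t ^ ((n : ℝ) / 2) = (√2 * s) ^ n := by
    rw [rpow_div_two_eq_sqrt _ ht0, rpow_natCast, hsqrt]
  have h2 : √2 ^ 2 = 2 := sq_sqrt zero_le_two
  have h2one : 1 ≤ √2 := one_le_sqrt.2 one_le_two
  rw [show (-1 : ℝ) + t = -cos θ by rw [hcos]; ring, kappa1_neg_cos hθ0 hθπ,
    show ((3 : ℝ) / 2) = ((3 : ℕ) : ℝ) / 2 by norm_num, hrpow,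
    show ((5 : ℝ) / 2) = ((5 : ℕ) : ℝ) / 2 by norm_num, hrpow]
  have hlead : 2 * √2 / (3 * π) * (√2 * s) ^ 3 = 8 / 3 * s ^ 3 / π := by
    field_simp
    linear_combination (2 * s ^ 3 * (√2 ^ 2 + 2)) * h2
  calc |(sin θ - θ * cos θ) / π - 2 * √2 / (3 * π) * (√2 * s) ^ 3|
      = |sin θ - θ * cos θ - 8 / 3 * s ^ 3| / π := by
        rw [hlead, ← sub_div, abs_div, abs_of_pos pi_pos]
    _ ≤ θ ^ 5 / 24 / π := by gcongr; exact abs_sin_sub_mul_cos_sub_sin_half_pow_le hθ0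
    _ ≤ (π * s) ^ 5 / 24 / π := by gcongr
    _ = π ^ 4 / 24 * s ^ 5 := by field_simp
    _ ≤ π ^ 4 / 24 * (√2 * s) ^ 5 := by
        gcongr
        exact le_mul_of_one_le_left hs0 h2one

theorem kappa1_neg_one_add_isBigO :
    (fun t : ℝ => kappa1 (-1 + t) - 2 * √2 / (3 * π) * t ^ ((3 : ℝ) / 2))
      =O[𝓝[>] (0 : ℝ)] fun t => t ^ ((5 : ℝ) / 2) := by
  refine IsBigO.of_bound (π ^ 4 / 24) ?_
  filter_upwards [Ioo_mem_nhdsGT two_pos] with t ⟨ht0, ht2⟩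
  rw [norm_eq_abs, norm_of_nonneg (rpow_nonneg ht0.le _)]
  exact abs_kappa1_neg_one_add_sub_le ht0.le ht2.le

/-- Asymptotic expansions of the degree-1 arc-cosine function `κ₁` around `±1`. -/
theorem kappa1_expansions :
    ((fun t : ℝ => kappa1 (1 - t) -
        (1 - t + 2 * Real.sqrt 2 / (3 * Real.pi) * t ^ ((3 : ℝ) / 2)))
      =O[𝓝[>] (0 : ℝ)] fun t => t ^ ((5 : ℝ) / 2)) ∧
    ((fun t : ℝ => kappa1 (-1 + t) - 2 * Real.sqrt 2 / (3 * Real.pi) * t ^ ((3 : ℝ) / 2))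
      =O[𝓝[>] (0 : ℝ)] fun t => t ^ ((5 : ℝ) / 2)) := by
  refine ⟨?_, kappa1_neg_one_add_isBigO⟩
  convert kappa1_neg_one_add_isBigO using 2 with t
  have h := kappa1_sub_kappa1_neg (1 - t)
  rw [show -(1 - t) = -1 + t by ring] at h
  linarith
end

section
/- For every integer ℓ ≥ 2, the (ℓ−1)-fold composition κ^ℓ := κ₁ ∘ ⋯ ∘ κ₁ (with ℓ−1 factors) satisfies, as t → 0⁺, κ^ℓ(1−t) = 1 − t + (ℓ−1) · (2√2/(3π)) · t^{3/2} + o(t^{3/2}). -/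
/-!
With `θ = arccos u` one has `κ₁(u) - u = (sin θ - θ cos θ)/π ~ θ³/(3π)`, and
`arccos (1 - t) ~ √(2t)` by the half-angle formula, so
`κ₁(1 - t) = 1 - t + (2√2/(3π)) t^{3/2} + o(t^{3/2})`. Expansions
`f (1 - t) = 1 - t + a tᵖ + o(tᵖ)` with `p > 1` compose by adding the coefficients, because
the inner map sends `1 - t` to `1 - s` with `s ~ t`; iterating gives the factor `ℓ - 1`.
-/

open Filter Asymptotics Real Set Topology

def HasExpansionAtOne (f : ℝ → ℝ) (p a : ℝ) : Prop :=
  (fun t => f (1 - t) - (1 - t + a * t ^ p)) =o[𝓝[>] 0] fun t => t ^ p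

theorem isLittleO_rpow_id_nhdsGT_zero {p : ℝ} (hp : 1 < p) :
    (fun t : ℝ => t ^ p) =o[𝓝[>] 0] id := by
  have hsmall : (fun t : ℝ => t ^ (p - 1)) =o[𝓝[>] 0] fun _ => (1 : ℝ) := by
    rw [isLittleO_one_iff]
    simpa [zero_rpow (sub_pos.2 hp).ne'] using
      ((continuousAt_id.rpow_const (Or.inr (sub_pos.2 hp).le)).tendsto).mono_left
        (nhdsWithin_le_nhds (a := (0 : ℝ)))
  refine ((hsmall.mul_isBigO (isBigO_refl id _)).congr' ?_ ?_)
  · filter_upwards [self_mem_nhdsWithin] with t (ht : 0 < t)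
    rw [id, ← rpow_add_one ht.ne', sub_add_cancel]
  · exact .of_forall fun t => one_mul t

theorem tendsto_nhdsGT_zero_of_isEquivalent_id {u : ℝ → ℝ} (h : u ~[𝓝[>] 0] id) :
    Tendsto u (𝓝[>] 0) (𝓝[>] 0) := by
  refine tendsto_nhdsWithin_iff.2 ⟨h.symm.tendsto_nhds ?_, ?_⟩
  · exact tendsto_nhdsWithin_of_tendsto_nhds tendsto_id
  · filter_upwards [h.isLittleO.bound one_half_pos, self_mem_nhdsWithin] with t hbound (ht : 0 < t)
    simp only [Pi.sub_apply, id, norm_eq_abs, abs_of_pos ht] at hbound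
    show 0 < u t
    linarith [(abs_le.1 hbound).1]

theorem rpow_isEquivalent_rpow_of_isEquivalent_id {u : ℝ → ℝ} (h : u ~[𝓝[>] 0] id)
    (p : ℝ) : (fun t => u t ^ p) ~[𝓝[>] 0] fun t => t ^ p := by
  -- `IsEquivalent.rpow` wants a comparison function that is nonnegative everywhere.
  have habs : (id : ℝ → ℝ) =ᶠ[𝓝[>] 0] fun t => |t| := by
    filter_upwards [self_mem_nhdsWithin] with t (ht : 0 < t) using (abs_of_pos ht).symm
  refine ((h.trans_eventuallyEq habs).rpow (fun t => abs_nonneg t)).trans_eventuallyEq ?_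
  filter_upwards [habs] with t ht
  simp [← ht]

namespace HasExpansionAtOne

variable {f g : ℝ → ℝ} {p a b : ℝ}

theorem one_sub_isEquivalent_id (hp : 1 < p) (hg : HasExpansionAtOne g p b) :
    (fun t => 1 - g (1 - t)) ~[𝓝[>] 0] id := by
  have hpow := isLittleO_rpow_id_nhdsGT_zero hp
  refine ((hg.trans hpow).neg_left.sub (hpow.const_mul_left b)).congr_left fun t => ?_
  simp only [Pi.sub_apply, id]
  ring

theorem comp (hp : 1 < p) (hf : HasExpansionAtOne f p a) (hg : HasExpansionAtOne g p b) :
    HasExpansionAtOne (f ∘ g) p (a + b) := by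
  set s : ℝ → ℝ := fun t => 1 - g (1 - t) with hs_def
  have hs : s ~[𝓝[>] 0] id := hg.one_sub_isEquivalent_id hp
  have hsp := rpow_isEquivalent_rpow_of_isEquivalent_id hs p
  have hfs : (fun t => f (1 - s t) - (1 - s t + a * s t ^ p)) =o[𝓝[>] 0] fun t => t ^ p :=
    (hf.comp_tendsto (tendsto_nhdsGT_zero_of_isEquivalent_id hs)).trans_isEquivalent hsp
  refine ((hfs.add hg).add (hsp.isLittleO.const_mul_left a)).congr_left fun t => ?_
  simp only [hs_def, sub_sub_cancel, Function.comp_apply, Pi.sub_apply]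
  ring

theorem iterate (hp : 1 < p) (hf : HasExpansionAtOne f p a) (n : ℕ) :
    HasExpansionAtOne f^[n + 1] p ((n + 1) * a) := by
  induction n with
  | zero => simpa using hf
  | succ n ih =>
    rw [Function.iterate_succ']
    convert hf.comp hp ih using 1
    push_cast
    ring

end HasExpansionAtOne

theorem hasExpansionAtOne_of_isEquivalent {f : ℝ → ℝ} {p a : ℝ}
    (h : (fun t => f (1 - t) - (1 - t)) ~[𝓝[>] 0] fun t => a * t ^ p) :
    HasExpansionAtOne f p a :=
  (h.isLittleO.trans_isBigO (isBigO_const_mul_self a _ _)).congr_left fun t => by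
    simp only [Pi.sub_apply]
    ring

theorem kappa1_sub_self (u : ℝ) : kappa1 u - u = (sin (arccos u) - u * arccos u) / π := by
  rw [kappa1, sin_arccos]
  field_simp
  ring

theorem sin_sub_mul_cos_isEquivalent :
    (fun θ => sin θ - θ * cos θ) ~[𝓝 0] fun θ => θ ^ 3 / 3 := by
  have hbound : ∀ θ : ℝ, |θ| ≤ 1 → |sin θ - θ * cos θ - θ ^ 3 / 3| ≤ |θ| ^ 5 := by
    intro θ hθ
    have hsin := sin_bound hθ
    have hcos := cos_bound hθ
    calc |sin θ - θ * cos θ - θ ^ 3 / 3|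
        = |(sin θ - (θ - θ ^ 3 / 6)) - θ * (cos θ - (1 - θ ^ 2 / 2))| := by ring_nf
      _ ≤ |sin θ - (θ - θ ^ 3 / 6)| + |θ| * |cos θ - (1 - θ ^ 2 / 2)| := by
        rw [← abs_mul]; exact abs_sub _ _
      _ ≤ |θ| ^ 5 / 100 + |θ| * (|θ| ^ 4 * (5 / 96)) := by gcongr
      _ ≤ |θ| ^ 5 := by nlinarith [pow_nonneg (abs_nonneg θ) 5]
  have hO : (fun θ => sin θ - θ * cos θ - θ ^ 3 / 3) =O[𝓝 0] fun θ : ℝ => θ ^ 5 := by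
    refine IsBigO.of_bound 1 ?_
    filter_upwards [Metric.closedBall_mem_nhds (0 : ℝ) one_pos] with θ hθ
    simpa [abs_pow] using hbound θ (by simpa using hθ)
  refine (hO.trans_isLittleO (isLittleO_pow_pow (by norm_num : 3 < 5))).trans_isBigO ?_
  exact (isBigO_const_mul_self 3 (fun θ : ℝ => θ ^ 3 / 3) _).congr_left fun θ => by ring

theorem tendsto_arccos_one_sub_nhdsGT_zero :
    Tendsto (fun t => arccos (1 - t)) (𝓝[>] 0) (𝓝 0) := by
  have hcont : Continuous fun t => arccos (1 - t) := by fun_prop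
  simpa using (hcont.tendsto 0).mono_left nhdsWithin_le_nhds

theorem arccos_one_sub_isEquivalent :
    (fun t => arccos (1 - t)) ~[𝓝[>] 0] fun t => √(2 * t) := by
  have hθ : Tendsto (fun t => arccos (1 - t) / 2) (𝓝[>] 0) (𝓝 0) := by
    simpa using tendsto_arccos_one_sub_nhdsGT_zero.div_const 2
  have hhalf : (fun t => arccos (1 - t) / 2) ~[𝓝[>] 0] fun t => √(t / 2) := by
    refine (isEquivalent_sin.comp_tendsto hθ).symm.trans_eventuallyEq ?_
    filter_upwards [Ioo_mem_nhdsGT (one_pos : (0 : ℝ) < 1)] with t ⟨ht0, ht1⟩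
    rw [Function.comp_apply, sin_half_eq_sqrt (arccos_nonneg _)
      (by linarith [arccos_le_pi (1 - t), pi_pos]), cos_arccos (by linarith) (by linarith)]
    ring_nf
  refine ((hhalf.mul (IsEquivalent.refl (u := fun _ => (2 : ℝ)))).congr_left
    (.of_forall fun t => by simp)).congr_right (.of_forall fun t => ?_)
  simp only [Pi.mul_apply]
  rw [show 2 * t = t / 2 * 2 ^ 2 by ring, sqrt_mul' _ (by positivity), sqrt_sq zero_le_two]

theorem hasExpansionAtOne_kappa1 : HasExpansionAtOne kappa1 (3 / 2) (2 * √2 / (3 * π)) := by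
  apply hasExpansionAtOne_of_isEquivalent
  have hcube : (fun t => (sin (arccos (1 - t)) - arccos (1 - t) * cos (arccos (1 - t))) / π)
      ~[𝓝[>] 0] fun t => √(2 * t) ^ 3 / 3 / π :=
    ((sin_sub_mul_cos_isEquivalent.comp_tendsto tendsto_arccos_one_sub_nhdsGT_zero).trans
      ((arccos_one_sub_isEquivalent.pow 3).div IsEquivalent.refl)).div IsEquivalent.refl
  refine (hcube.congr_left ?_).congr_right ?_
  · filter_upwards [Ioo_mem_nhdsGT (one_pos : (0 : ℝ) < 1)] with t ⟨ht0, ht1⟩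
    rw [kappa1_sub_self, cos_arccos (by linarith) (by linarith), mul_comm]
  · filter_upwards [self_mem_nhdsWithin] with t (ht : 0 < t)
    rw [show (3 : ℝ) / 2 = 1 + 1 / 2 by norm_num, rpow_add ht, rpow_one, ← sqrt_eq_rpow,
      sqrt_mul zero_le_two]
    field_simp
    rw [sq_sqrt zero_le_two, sq_sqrt ht.le]

/-- Expansion around `+1` of the deep ReLU random-feature kernel function
`κ^ℓ = κ₁ ∘ ⋯ ∘ κ₁` (`ℓ-1` factors). -/
theorem deep_rf_expansion_plus_one (ℓ : ℕ) (hℓ : 2 ≤ ℓ) :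
    (fun t : ℝ => kappa1^[ℓ - 1] (1 - t) -
        (1 - t + ((ℓ : ℝ) - 1) * (2 * Real.sqrt 2 / (3 * Real.pi)) * t ^ ((3 : ℝ) / 2)))
      =o[𝓝[>] (0 : ℝ)] fun t => t ^ ((3 : ℝ) / 2) := by
  obtain ⟨n, rfl⟩ : ∃ n, ℓ = n + 2 := ⟨ℓ - 2, by omega⟩
  have hcoeff : ((n + 2 : ℕ) : ℝ) - 1 = n + 1 := by push_cast; ring
  rw [hcoeff]
  exact hasExpansionAtOne_kappa1.iterate (by norm_num) n
end

section
/- For every integer ℓ ≥ 2 there exist real numbers a_ℓ ≤ ℓ and c_ℓ ∈ (0, √2/π] such that the ℓ-layer neural tangent kernel function κ_NTK^ℓ satisfies κ_NTK^ℓ(−1+t) = a_ℓ − c_ℓ t^{1/2} + o(t^{1/2}) as t → 0⁺; moreover c_ℓ < √2/π whenever ℓ ≥ 3. -/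
open Filter Asymptotics Real Set Topology

/-- The `ℓ`-layer neural tangent kernel function of a fully-connected ReLU network
(defined for `ℓ ≥ 2`; values below 2 are set to the 2-layer NTK):
`κ_NTK^2(u) = u κ₀(u) + κ₁(u)` and
`κ_NTK^ℓ(u) = κ_NTK^{ℓ-1}(u) · κ₀(κ₁^{∘(ℓ-2)}(u)) + κ₁^{∘(ℓ-1)}(u)` for `ℓ ≥ 3`. -/
noncomputable def kappaNTK : ℕ → ℝ → ℝ
  | 0, u => u * kappa0 u + kappa1 u
  | 1, u => u * kappa0 u + kappa1 u
  | 2, u => u * kappa0 u + kappa1 u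
  | n + 3, u => kappaNTK (n + 2) u * kappa0 (kappa1^[n + 1] u) + kappa1^[n + 2] u

/-! Near `-1`, `κ₀(-1 + t) = arccos(1 - t)/π ∼ (√2/π)√t`, while `κ₁` is 1-Lipschitz on `[-1, 1]`
(its derivative is `κ₀ ∈ [0, 1]`) and `κ₁(-1) = 0`. So every iterate `κ₁^{∘m}(-1 + t)` moves by at
most `t = o(√t)` away from its value at `-1`, which for `m ≥ 1` lies in `[0, 1)`, where `κ₀` is
differentiable. In the recursion for `κ_NTK^ℓ` only the `√t`-term of `κ_NTK^2`, coming from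
`u κ₀(u)`, survives; each further layer multiplies it by `κ₀(κ₁^{∘(ℓ-2)}(-1)) ∈ (0, 1)`. -/

lemma kappa0_neg_one : kappa0 (-1) = 0 := by
  simp [kappa0, Real.arccos_neg_one, Real.pi_ne_zero]

lemma kappa1_neg_one : kappa1 (-1) = 0 := by
  simp [kappa1, Real.arccos_neg_one]

lemma kappa1_one : kappa1 1 = 1 := by
  simp [kappa1, Real.arccos_one]

lemma kappa0_nonneg (x : ℝ) : 0 ≤ kappa0 x := by
  rw [kappa0, sub_nonneg, div_le_one Real.pi_pos]
  exact Real.arccos_le_pi x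

lemma kappa0_le_one (x : ℝ) : kappa0 x ≤ 1 := by
  rw [kappa0, sub_le_self_iff]
  exact div_nonneg (Real.arccos_nonneg x) Real.pi_pos.le

lemma kappa0_pos {x : ℝ} (hx : -1 < x) : 0 < kappa0 x := by
  rw [kappa0, sub_pos, div_lt_one Real.pi_pos]
  exact Real.arccos_lt_pi.2 hx

lemma kappa0_lt_one {x : ℝ} (hx : x < 1) : kappa0 x < 1 := by
  rw [kappa0, sub_lt_self_iff]
  exact div_pos (Real.arccos_pos.2 hx) Real.pi_pos

lemma continuous_kappa1 : Continuous kappa1 := by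
  unfold kappa1
  fun_prop

lemma hasDerivAt_kappa1 {x : ℝ} (h₁ : -1 < x) (h₂ : x < 1) :
    HasDerivAt kappa1 (kappa0 x) x := by
  have hpos : 0 < 1 - x ^ 2 := by nlinarith
  have hsqrt : HasDerivAt (fun u : ℝ => √(1 - u ^ 2)) (-(2 * x) / (2 * √(1 - x ^ 2))) x :=
    ((hasDerivAt_pow 2 x).const_sub 1).sqrt hpos.ne' |>.congr_deriv (by ring)
  have hlin := (hasDerivAt_id x).mul ((Real.hasDerivAt_arccos h₁.ne' h₂.ne).const_sub π)
  refine ((hsqrt.add hlin).div_const π).congr_deriv ?_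
  have : √(1 - x ^ 2) ≠ 0 := (Real.sqrt_pos.2 hpos).ne'
  simp only [kappa0, id]
  field_simp
  ring

lemma strictMonoOn_kappa1 : StrictMonoOn kappa1 (Icc (-1) 1) := by
  refine strictMonoOn_of_deriv_pos (convex_Icc _ _) continuous_kappa1.continuousOn fun x hx => ?_
  rw [interior_Icc] at hx
  rw [(hasDerivAt_kappa1 hx.1 hx.2).deriv]
  exact kappa0_pos hx.1

lemma kappa1_mem_Icc {x : ℝ} (hx : x ∈ Icc (-1) 1) : kappa1 x ∈ Icc 0 1 := by
  have hmono := strictMonoOn_kappa1.monotoneOn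
  exact ⟨kappa1_neg_one ▸ hmono (by simp) hx hx.1, kappa1_one ▸ hmono hx (by simp) hx.2⟩

lemma kappa1_lt_one {x : ℝ} (hx : x ∈ Ico (-1) 1) : kappa1 x < 1 :=
  kappa1_one ▸ strictMonoOn_kappa1 (Ico_subset_Icc_self hx) (by simp) hx.2

lemma mapsTo_kappa1_Icc : MapsTo kappa1 (Icc (-1) 1) (Icc (-1) 1) := fun _ hx =>
  Icc_subset_Icc (by norm_num) le_rfl (kappa1_mem_Icc hx)

lemma mapsTo_kappa1_Ioo : MapsTo kappa1 (Ioo (-1) 1) (Ioo (-1) 1) := fun _ hx =>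
  ⟨by linarith [(kappa1_mem_Icc (Ioo_subset_Icc_self hx)).1],
    kappa1_lt_one (Ioo_subset_Ico_self hx)⟩

lemma lipschitzOnWith_kappa1 : LipschitzOnWith 1 kappa1 (Icc (-1) 1) := by
  rw [← closure_Ioo (by norm_num : (-1 : ℝ) ≠ 1)]
  refine .closure continuous_kappa1.continuousOn ?_
  refine (convex_Ioo _ _).lipschitzOnWith_of_nnnorm_hasDerivWithin_le
    (fun x hx => (hasDerivAt_kappa1 hx.1 hx.2).hasDerivWithinAt) fun x _ => ?_
  rw [← NNReal.coe_le_coe, coe_nnnorm, Real.norm_of_nonneg (kappa0_nonneg x)]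
  exact kappa0_le_one x

lemma LipschitzOnWith.iterate {α : Type*} [PseudoEMetricSpace α] {f : α → α} {s : Set α}
    {K : NNReal} (hf : LipschitzOnWith K f s) (hs : MapsTo f s s) :
    ∀ n, LipschitzOnWith (K ^ n) f^[n] s
  | 0 => by simpa using LipschitzWith.id.lipschitzOnWith
  | n + 1 => by
    rw [pow_succ, Function.iterate_succ]
    exact (hf.iterate hs n).comp hf hs

lemma isLittleO_id_sqrt_nhdsGT : (fun t : ℝ => t) =o[𝓝[>] 0] (√·) := by
  have hsqrt : (√·) =o[𝓝[>] (0 : ℝ)] (fun _ => (1 : ℝ)) :=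
    isLittleO_one_iff ℝ |>.2 <| by
      simpa using (Real.continuous_sqrt.tendsto 0).mono_left nhdsWithin_le_nhds
  refine (hsqrt.mul_isBigO (isBigO_refl (√·) _)).congr' ?_ (by simp)
  filter_upwards [self_mem_nhdsWithin] with t ht
  exact Real.mul_self_sqrt (le_of_lt ht)

lemma isEquivalent_arccos_one_sub :
    (fun t => arccos (1 - t)) ~[𝓝[>] 0] fun t => √2 * √t := by
  have harccos : Tendsto (fun t => arccos (1 - t)) (𝓝[>] 0) (𝓝 0) := by
    refine Tendsto.mono_left ?_ nhdsWithin_le_nhds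
    exact (by fun_prop : Continuous fun t : ℝ => arccos (1 - t)).tendsto' 0 0 (by simp)
  have hsin : (fun t => sin (arccos (1 - t))) =ᶠ[𝓝[>] 0] fun t => √t * √(2 - t) := by
    filter_upwards [self_mem_nhdsWithin] with t ht
    rw [Real.sin_arccos, ← Real.sqrt_mul (le_of_lt ht)]
    ring_nf
  have hsqrt : (fun t => √(2 - t)) ~[𝓝[>] 0] fun _ => √2 := by
    refine (isEquivalent_const_iff_tendsto (by positivity)).2 (Tendsto.mono_left ?_ nhdsWithin_le_nhds)
    exact (by fun_prop : Continuous fun t : ℝ => √(2 - t)).tendsto' 0 _ (by simp)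
  refine ((Real.isEquivalent_sin.comp_tendsto harccos).symm.congr_right hsin).trans ?_
  exact ((IsEquivalent.refl (u := (√·))).mul hsqrt).congr_right
    (.of_eq (funext fun t => mul_comm _ _))

lemma isLittleO_kappa0_neg_one_add :
    (fun t => kappa0 (-1 + t) - √2 / π * √t) =o[𝓝[>] 0] (√·) := by
  refine ((isEquivalent_arccos_one_sub.isLittleO.const_mul_left π⁻¹).trans_isBigO
    (isBigO_const_mul_self _ _ _)).congr_left fun t => ?_
  rw [Pi.sub_apply, kappa0, show -1 + t = -(1 - t) by ring, Real.arccos_neg]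
  field_simp
  ring

lemma abs_kappa1_iterate_neg_one_add_sub_le (m : ℕ) {t : ℝ} (ht : t ∈ Icc 0 2) :
    |kappa1^[m] (-1 + t) - kappa1^[m] (-1)| ≤ t := by
  have hlip := (lipschitzOnWith_kappa1.iterate mapsTo_kappa1_Icc m).dist_le_mul (-1 + t)
    ⟨by linarith [ht.1], by linarith [ht.2]⟩ (-1) (by norm_num)
  simpa [Real.dist_eq, abs_of_nonneg ht.1] using hlip

lemma isLittleO_kappa1_iterate_neg_one_add (m : ℕ) :
    (fun t => kappa1^[m] (-1 + t) - kappa1^[m] (-1)) =o[𝓝[>] 0] (√·) := by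
  refine IsBigO.trans_isLittleO ?_ isLittleO_id_sqrt_nhdsGT
  refine .of_bound' ?_
  filter_upwards [Ioo_mem_nhdsGT (show (0 : ℝ) < 2 by norm_num)] with t ht
  rw [Real.norm_eq_abs, Real.norm_of_nonneg ht.1.le]
  exact abs_kappa1_iterate_neg_one_add_sub_le m (Ioo_subset_Icc_self ht)

lemma kappa1_iterate_succ_neg_one_mem_Ioo (m : ℕ) : kappa1^[m + 1] (-1) ∈ Ioo (-1) 1 := by
  rw [Function.iterate_succ_apply, kappa1_neg_one]
  exact mapsTo_kappa1_Ioo.iterate m ⟨by norm_num, by norm_num⟩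

lemma kappa1_iterate_succ_neg_one_nonneg (m : ℕ) : 0 ≤ kappa1^[m + 1] (-1) := by
  rw [Function.iterate_succ_apply']
  exact (kappa1_mem_Icc (mapsTo_kappa1_Icc.iterate m ⟨le_rfl, by norm_num⟩)).1

lemma isLittleO_kappa0_kappa1_iterate_succ_neg_one_add (m : ℕ) :
    (fun t => kappa0 (kappa1^[m + 1] (-1 + t)) - kappa0 (kappa1^[m + 1] (-1)))
      =o[𝓝[>] 0] (√·) := by
  obtain ⟨hq₁, hq₂⟩ := kappa1_iterate_succ_neg_one_mem_Ioo m
  have hdiff : DifferentiableAt ℝ kappa0 (kappa1^[m + 1] (-1)) :=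
    (differentiableAt_const _).sub
      ((Real.differentiableAt_arccos.2 ⟨hq₁.ne', hq₂.ne⟩).div_const π)
  have htendsto : Tendsto (fun t => kappa1^[m + 1] (-1 + t)) (𝓝[>] 0)
      (𝓝 (kappa1^[m + 1] (-1))) := by
    refine Tendsto.mono_left ?_ nhdsWithin_le_nhds
    exact ((continuous_kappa1.iterate _).comp (continuous_const_add (-1))).tendsto' 0 _
      (by simp)
  exact (hdiff.isBigO_sub.comp_tendsto htendsto).trans_isLittleO
    (isLittleO_kappa1_iterate_neg_one_add (m + 1))

lemma isLittleO_mul_add_expansion {α : Type*} {l : Filter α} {f g h r : α → ℝ} {a b c d : ℝ}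
    (hr : Tendsto r l (𝓝 0)) (hf : (fun x => f x - (a - c * r x)) =o[l] r)
    (hg : (fun x => g x - b) =o[l] r) (hh : (fun x => h x - d) =o[l] r) :
    (fun x => f x * g x + h x - (a * b + d - c * b * r x)) =o[l] r := by
  have hr₁ : r =O[l] (fun _ => (1 : ℝ)) := hr.isBigO_one ℝ
  have hg₁ : g =O[l] (fun _ => (1 : ℝ)) :=
    ((hg.isBigO.trans hr₁).add (isBigO_const_one ℝ b l)).congr_left fun x => by ring
  have hA : (fun x => a - c * r x) =O[l] (fun _ => (1 : ℝ)) :=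
    (isBigO_const_one ℝ a l).sub (hr₁.const_mul_left c)
  have h₁ : (fun x => (f x - (a - c * r x)) * g x) =o[l] r := by
    simpa using hf.mul_isBigO hg₁
  have h₂ : (fun x => (a - c * r x) * (g x - b)) =o[l] r := by
    simpa using hA.mul_isLittleO hg
  exact ((h₁.add h₂).add hh).congr_left fun x => by ring

/-- The coefficient `c_{n+2}` of `√t`: the factor `√2/π` comes from `κ₀(-1 + t)` in `κ_NTK^2`,
and the `k`-th factor from the layer `k + 3`. -/
noncomputable def ntkSqrtCoeff (n : ℕ) : ℝ :=
  √2 / π * ∏ k ∈ Finset.range n, kappa0 (kappa1^[k + 1] (-1))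

lemma ntkSqrtCoeff_succ (n : ℕ) :
    ntkSqrtCoeff (n + 1) = ntkSqrtCoeff n * kappa0 (kappa1^[n + 1] (-1)) := by
  rw [ntkSqrtCoeff, ntkSqrtCoeff, Finset.prod_range_succ, mul_assoc]

lemma ntkSqrtCoeff_pos (n : ℕ) : 0 < ntkSqrtCoeff n :=
  mul_pos (by positivity) <| Finset.prod_pos fun k _ =>
    kappa0_pos (kappa1_iterate_succ_neg_one_mem_Ioo k).1

lemma ntkSqrtCoeff_le (n : ℕ) : ntkSqrtCoeff n ≤ √2 / π :=
  mul_le_of_le_one_right (by positivity) <|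
    Finset.prod_le_one (fun _ _ => kappa0_nonneg _) fun _ _ => kappa0_le_one _

lemma ntkSqrtCoeff_lt {n : ℕ} (hn : 1 ≤ n) : ntkSqrtCoeff n < √2 / π := by
  obtain ⟨m, rfl⟩ := Nat.exists_eq_add_of_le' hn
  rw [ntkSqrtCoeff_succ]
  exact (mul_lt_of_lt_one_right (ntkSqrtCoeff_pos m)
    (kappa0_lt_one (kappa1_iterate_succ_neg_one_mem_Ioo m).2)).trans_le (ntkSqrtCoeff_le m)

lemma kappaNTK_two_neg_one : kappaNTK 2 (-1) = 0 := by
  simp [kappaNTK, kappa0_neg_one, kappa1_neg_one]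

lemma kappaNTK_neg_one_mem_Icc (n : ℕ) : kappaNTK (n + 2) (-1) ∈ Icc 0 (n : ℝ) := by
  induction n with
  | zero => simp [kappaNTK_two_neg_one]
  | succ n ih =>
    have hq := kappa1_iterate_succ_neg_one_mem_Ioo (n + 1)
    have hq₀ := kappa1_iterate_succ_neg_one_nonneg (n + 1)
    have hmul := mul_le_of_le_one_right ih.1 (kappa0_le_one (kappa1^[n + 1] (-1)))
    have hmul₀ := mul_nonneg ih.1 (kappa0_nonneg (kappa1^[n + 1] (-1)))
    change kappaNTK (n + 2) (-1) * kappa0 (kappa1^[n + 1] (-1)) + kappa1^[n + 2] (-1) ∈ _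
    push_cast
    constructor <;> linarith [ih.2, hq.2]

lemma kappaNTK_neg_one_add_expansion (n : ℕ) :
    (fun t => kappaNTK (n + 2) (-1 + t) - (kappaNTK (n + 2) (-1) - ntkSqrtCoeff n * √t))
      =o[𝓝[>] 0] (√·) := by
  induction n with
  | zero =>
    have hlin : (fun t => t * kappa0 (-1 + t)) =o[𝓝[>] 0] (√·) := by
      refine IsBigO.trans_isLittleO (.of_bound 1 (.of_forall fun t => ?_)) isLittleO_id_sqrt_nhdsGT
      rw [norm_mul, one_mul, Real.norm_of_nonneg (kappa0_nonneg _)]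
      exact mul_le_of_le_one_right (norm_nonneg t) (kappa0_le_one _)
    have hkappa1 := isLittleO_kappa1_iterate_neg_one_add 1
    simp only [Function.iterate_one, kappa1_neg_one, sub_zero] at hkappa1
    refine ((isLittleO_kappa0_neg_one_add.neg_left.add hlin).add hkappa1).congr_left fun t => ?_
    rw [kappaNTK_two_neg_one, ntkSqrtCoeff, Finset.prod_range_zero, mul_one]
    simp only [kappaNTK]
    ring
  | succ n ih =>
    have hsqrt : Tendsto (√·) (𝓝[>] (0 : ℝ)) (𝓝 0) :=
      (Real.continuous_sqrt.tendsto' 0 0 (by simp)).mono_left nhdsWithin_le_nhds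
    refine (isLittleO_mul_add_expansion hsqrt ih
      (isLittleO_kappa0_kappa1_iterate_succ_neg_one_add n)
      (isLittleO_kappa1_iterate_neg_one_add (n + 2))).congr_left fun t => ?_
    rw [ntkSqrtCoeff_succ]
    rfl

/-- Expansion around `-1` of the `ℓ`-layer NTK function. -/
theorem deep_ntk_expansion_minus_one (ℓ : ℕ) (hℓ : 2 ≤ ℓ) :
    ∃ a c : ℝ, a ≤ (ℓ : ℝ) ∧ 0 < c ∧ c ≤ Real.sqrt 2 / Real.pi ∧
      (3 ≤ ℓ → c < Real.sqrt 2 / Real.pi) ∧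
      (fun t : ℝ => kappaNTK ℓ (-1 + t) - (a - c * t ^ ((1 : ℝ) / 2)))
        =o[𝓝[>] (0 : ℝ)] fun t => t ^ ((1 : ℝ) / 2) := by
  obtain ⟨n, rfl⟩ : ∃ n, ℓ = n + 2 := ⟨ℓ - 2, by omega⟩
  refine ⟨kappaNTK (n + 2) (-1), ntkSqrtCoeff n, ?_, ntkSqrtCoeff_pos n, ntkSqrtCoeff_le n,
    fun h => ntkSqrtCoeff_lt (by omega), ?_⟩
  · push_cast
    linarith [(kappaNTK_neg_one_mem_Icc n).2]
  · simpa only [← Real.sqrt_eq_rpow] using kappaNTK_neg_one_add_expansion n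
end
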